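/- Let c ∈ (0, 1/2], let A₁ = diag(c, c^{-1}) and A₂ be any 2×2 orthogonal matrix, and set 𝓜 = {A₁, A₂}. Then the stabilizability radius satisfies ρ̃(𝓜) ≥ 1/√2 > c = min{s_1(A₁), s_1(A₂)}. -/

import Mathlib

open Real MeasureTheory Matrix

noncomputable def appE {n : ℕ} (A : Matrix (Fin n) (Fin n) ℝ) (x : EuclideanSpace ℝ (Fin n)) :
    EuclideanSpace ℝ (Fin n) :=
  Matrix.toEuclideanLin A x

noncomputable def s1 {n : ℕ} (A : Matrix (Fin n) (Fin n) ℝ) : ℝ :=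
  sInf {r : ℝ | ∃ x : EuclideanSpace ℝ (Fin n), ‖x‖ = 1 ∧ r = ‖appE A x‖}

def IsTraj {n : ℕ} (M : Set (Matrix (Fin n) (Fin n) ℝ)) (x : ℕ → EuclideanSpace ℝ (Fin n)) : Prop :=
  ∀ k : ℕ, ∃ A ∈ M, x (k + 1) = appE A (x k)

noncomputable def stabRadius {n : ℕ} (M : Set (Matrix (Fin n) (Fin n) ℝ)) : ℝ :=
  sInf {l : ℝ | 0 ≤ l ∧ ∃ C > (0:ℝ), ∀ x0 : EuclideanSpace ℝ (Fin n),
    ∃ x : ℕ → EuclideanSpace ℝ (Fin n), x 0 = x0 ∧ IsTraj M x ∧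
      ∀ k : ℕ, ‖x k‖ ≤ C * l ^ k * ‖x0‖}

noncomputable def stabRadiusAt {n : ℕ} (M : Set (Matrix (Fin n) (Fin n) ℝ))
    (x0 : EuclideanSpace ℝ (Fin n)) : ℝ :=
  sInf {l : ℝ | 0 ≤ l ∧ ∃ x : ℕ → EuclideanSpace ℝ (Fin n), x 0 = x0 ∧ IsTraj M x ∧
    ∃ C > (0:ℝ), ∀ k : ℕ, ‖x k‖ ≤ C * l ^ k * ‖x0‖}

open scoped ENNReal

lemma appE_mul {n : ℕ} (A B : Matrix (Fin n) (Fin n) ℝ) (x : EuclideanSpace ℝ (Fin n)) :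
    appE (A * B) x = appE A (appE B x) := by
  simp [appE, Matrix.toEuclideanLin_apply, Matrix.mulVec_mulVec]

lemma appE_one {n : ℕ} (x : EuclideanSpace ℝ (Fin n)) : appE 1 x = x := by
  simp [appE, Matrix.toEuclideanLin_apply, Matrix.one_mulVec]

/-- product of the matrices along a word -/

def pw (M1 M2 : Matrix (Fin 2) (Fin 2) ℝ) (w : List Bool) : Matrix (Fin 2) (Fin 2) ℝ :=
  (w.map (fun b => if b then M1 else M2)).prod

lemma pw_nil (M1 M2 : Matrix (Fin 2) (Fin 2) ℝ) : pw M1 M2 [] = 1 := rfl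

lemma pw_cons (M1 M2 : Matrix (Fin 2) (Fin 2) ℝ) (b : Bool) (w : List Bool) :
    pw M1 M2 (b :: w) = (if b then M1 else M2) * pw M1 M2 w := by
  simp [pw]

lemma abs_det_pw (M1 M2 : Matrix (Fin 2) (Fin 2) ℝ) (h1 : |M1.det| = 1) (h2 : |M2.det| = 1) :
    ∀ w : List Bool, |(pw M1 M2 w).det| = 1 := by
  intro w
  induction w with
  | nil => simp [pw_nil]
  | cons b w ih =>
    rw [pw_cons, Matrix.det_mul, abs_mul, ih, mul_one]
    cases b <;> simpa

lemma traj_word (M1 M2 : Matrix (Fin 2) (Fin 2) ℝ) (x : ℕ → EuclideanSpace ℝ (Fin 2))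
    (htraj : IsTraj {M1, M2} x) :
    ∀ k : ℕ, ∃ w : List Bool, w.length = k ∧ x k = appE (pw M1 M2 w) (x 0) := by
  intro k
  induction k with
  | zero => exact ⟨[], rfl, by rw [pw_nil, appE_one]⟩
  | succ k ih =>
    obtain ⟨w, hlen, hw⟩ := ih
    obtain ⟨A, hA, hstep⟩ := htraj k
    rcases Set.mem_insert_iff.1 hA with hA | hA
    · refine ⟨true :: w, by simp [hlen], ?_⟩
      rw [pw_cons, if_pos rfl, appE_mul, ← hw, ← hA, hstep]
    · refine ⟨false :: w, by simp [hlen], ?_⟩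
      rw [pw_cons, if_neg (by simp), appE_mul, ← hw, ← Set.mem_singleton_iff.1 hA, hstep]

lemma det_toEuclideanLin (A : Matrix (Fin 2) (Fin 2) ℝ) :
    LinearMap.det (Matrix.toEuclideanLin A) = A.det := by
  rw [Matrix.toEuclideanLin_eq_toLin, LinearMap.det_toLin]

/-- The key measure-theoretic lower bound. -/

lemma one_le_key (M1 M2 : Matrix (Fin 2) (Fin 2) ℝ) (h1 : |M1.det| = 1) (h2 : |M2.det| = 1)
    (l C : ℝ) (hl0 : 0 ≤ l) (hC : 0 < C)
    (H : ∀ x0 : EuclideanSpace ℝ (Fin 2),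
      ∃ x : ℕ → EuclideanSpace ℝ (Fin 2), x 0 = x0 ∧ IsTraj {M1, M2} x ∧
        ∀ k : ℕ, ‖x k‖ ≤ C * l ^ k * ‖x0‖) (k : ℕ) :
    1 ≤ C ^ 2 * (2 * l ^ 2) ^ k := by
  set r : ℝ := C * l ^ k with hr
  have hr0 : 0 ≤ r := by positivity
  -- covering
  have cover : Metric.closedBall (0 : EuclideanSpace ℝ (Fin 2)) 1 ⊆
      ⋃ (w : Fin k → Bool),
        (Matrix.toEuclideanLin (pw M1 M2 (List.ofFn w)) : EuclideanSpace ℝ (Fin 2) →ₗ[ℝ]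
          EuclideanSpace ℝ (Fin 2)) ⁻¹' Metric.closedBall 0 r := by
    intro x0 hx0
    obtain ⟨x, hx00, htraj, hbd⟩ := H x0
    obtain ⟨w, hlen, hw⟩ := traj_word M1 M2 x htraj k
    subst hlen
    refine Set.mem_iUnion.2 ⟨w.get, ?_⟩
    simp only [Set.mem_preimage, List.ofFn_get]
    have hx0' : ‖x0‖ ≤ 1 := by simpa using hx0
    have : ‖x w.length‖ ≤ r := by
      calc ‖x w.length‖ ≤ C * l ^ w.length * ‖x0‖ := hbd w.length
        _ ≤ C * l ^ w.length * 1 := by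
            apply mul_le_mul_of_nonneg_left hx0' (by positivity)
        _ = r := by rw [mul_one]
    have hmem : ‖appE (pw M1 M2 w) x0‖ ≤ r := by rw [← hx00, ← hw]; exact this
    simpa [appE, Metric.mem_closedBall, dist_zero_right] using hmem
  -- measures
  have heach : ∀ w : Fin k → Bool,
      volume ((Matrix.toEuclideanLin (pw M1 M2 (List.ofFn w)) : EuclideanSpace ℝ (Fin 2) →ₗ[ℝ]
          EuclideanSpace ℝ (Fin 2)) ⁻¹' Metric.closedBall 0 r)
        = ENNReal.ofReal (r ^ 2) * volume (Metric.ball (0 : EuclideanSpace ℝ (Fin 2)) 1) := by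
    intro w
    have habs : |(pw M1 M2 (List.ofFn w)).det| = 1 := abs_det_pw M1 M2 h1 h2 _
    have hdet : LinearMap.det (Matrix.toEuclideanLin (pw M1 M2 (List.ofFn w)) :
        EuclideanSpace ℝ (Fin 2) →ₗ[ℝ] EuclideanSpace ℝ (Fin 2)) = (pw M1 M2 (List.ofFn w)).det :=
      det_toEuclideanLin _
    have hne : LinearMap.det (Matrix.toEuclideanLin (pw M1 M2 (List.ofFn w)) :
        EuclideanSpace ℝ (Fin 2) →ₗ[ℝ] EuclideanSpace ℝ (Fin 2)) ≠ 0 := by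
      rw [hdet]
      intro h
      rw [h] at habs
      simp at habs
    rw [MeasureTheory.Measure.addHaar_preimage_linearMap volume hne, hdet, abs_inv, habs]
    rw [Measure.addHaar_closedBall volume 0 hr0]
    have : Module.finrank ℝ (EuclideanSpace ℝ (Fin 2)) = 2 := by simp
    rw [this]
    simp
  have h1' : volume (Metric.closedBall (0 : EuclideanSpace ℝ (Fin 2)) 1)
      ≤ (2 : ℝ≥0∞) ^ k * (ENNReal.ofReal (r ^ 2)
        * volume (Metric.ball (0 : EuclideanSpace ℝ (Fin 2)) 1)) := by
    calc volume (Metric.closedBall (0 : EuclideanSpace ℝ (Fin 2)) 1)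
        ≤ volume (⋃ (w : Fin k → Bool),
            (Matrix.toEuclideanLin (pw M1 M2 (List.ofFn w)) : EuclideanSpace ℝ (Fin 2) →ₗ[ℝ]
              EuclideanSpace ℝ (Fin 2)) ⁻¹' Metric.closedBall 0 r) := measure_mono cover
      _ ≤ ∑ w : (Fin k → Bool), volume
            ((Matrix.toEuclideanLin (pw M1 M2 (List.ofFn w)) : EuclideanSpace ℝ (Fin 2) →ₗ[ℝ]
              EuclideanSpace ℝ (Fin 2)) ⁻¹' Metric.closedBall 0 r) :=
          measure_iUnion_fintype_le _ _
      _ = ∑ _w : (Fin k → Bool), (ENNReal.ofReal (r ^ 2)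
            * volume (Metric.ball (0 : EuclideanSpace ℝ (Fin 2)) 1)) :=
          Finset.sum_congr rfl (fun w _ => heach w)
      _ = (2 : ℝ≥0∞) ^ k * (ENNReal.ofReal (r ^ 2)
            * volume (Metric.ball (0 : EuclideanSpace ℝ (Fin 2)) 1)) := by
          rw [Finset.sum_const, nsmul_eq_mul]
          congr 1
          rw [Finset.card_univ]
          simp [Fintype.card_fun]
  set B := volume (Metric.ball (0 : EuclideanSpace ℝ (Fin 2)) 1) with hB
  have hBle : B ≤ volume (Metric.closedBall (0 : EuclideanSpace ℝ (Fin 2)) 1) :=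
    measure_mono Metric.ball_subset_closedBall
  have hBpos : B ≠ 0 := (Metric.measure_ball_pos volume _ one_pos).ne'
  have hBfin : B ≠ ⊤ := measure_ball_lt_top.ne
  have hX : (1 : ℝ≥0∞) * B ≤ ((2 : ℝ≥0∞) ^ k * ENNReal.ofReal (r ^ 2)) * B := by
    rw [one_mul, mul_assoc]
    exact le_trans hBle h1'
  have hXX : (1 : ℝ≥0∞) ≤ (2 : ℝ≥0∞) ^ k * ENNReal.ofReal (r ^ 2) :=
    (ENNReal.mul_le_mul_iff_left hBpos hBfin).1 hX
  have h2k : ((2 : ℝ≥0∞) ^ k) = ENNReal.ofReal ((2 : ℝ) ^ k) := by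
    rw [ENNReal.ofReal_pow (by norm_num)]
    norm_num
  rw [h2k, ← ENNReal.ofReal_mul (by positivity)] at hXX
  have hreal : (1 : ℝ) ≤ (2 : ℝ) ^ k * r ^ 2 := by
    have := ENNReal.one_le_ofReal.1 hXX
    exact this
  calc (1 : ℝ) ≤ (2 : ℝ) ^ k * r ^ 2 := hreal
    _ = C ^ 2 * (2 * l ^ 2) ^ k := by rw [hr]; ring

lemma norm_euc (x : EuclideanSpace ℝ (Fin 2)) : ‖x‖ = Real.sqrt (x 0 ^ 2 + x 1 ^ 2) := by
  rw [EuclideanSpace.norm_eq]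
  congr 1
  rw [Fin.sum_univ_two, Real.norm_eq_abs, Real.norm_eq_abs, sq_abs, sq_abs]

lemma appE_apply {n : ℕ} (A : Matrix (Fin n) (Fin n) ℝ) (x : EuclideanSpace ℝ (Fin n)) (i : Fin n) :
    appE A x i = (A *ᵥ (fun j => x j)) i := rfl

lemma norm_appE_orth (A : Matrix (Fin 2) (Fin 2) ℝ) (hA : Aᵀ * A = 1)
    (x : EuclideanSpace ℝ (Fin 2)) : ‖appE A x‖ = ‖x‖ := by
  set v : Fin 2 → ℝ := fun j => x j with hv
  have hdot : (A *ᵥ v) ⬝ᵥ (A *ᵥ v) = v ⬝ᵥ v := by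
    calc (A *ᵥ v) ⬝ᵥ (A *ᵥ v) = ((A *ᵥ v) ᵥ* A) ⬝ᵥ v := Matrix.dotProduct_mulVec _ _ _
      _ = ((v ᵥ* Aᵀ) ᵥ* A) ⬝ᵥ v := by rw [Matrix.vecMul_transpose]
      _ = (v ᵥ* (Aᵀ * A)) ⬝ᵥ v := by rw [Matrix.vecMul_vecMul]
      _ = v ⬝ᵥ v := by rw [hA, Matrix.vecMul_one]
  rw [norm_euc, norm_euc]
  congr 1
  rw [appE_apply, appE_apply]
  simpa [dotProduct, Fin.sum_univ_two, sq] using hdot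

lemma s1_orth (A : Matrix (Fin 2) (Fin 2) ℝ) (hA : Aᵀ * A = 1) : s1 A = 1 := by
  have hset : {r : ℝ | ∃ x : EuclideanSpace ℝ (Fin 2), ‖x‖ = 1 ∧ r = ‖appE A x‖} = {1} := by
    ext r
    simp only [Set.mem_setOf_eq, Set.mem_singleton_iff]
    constructor
    · rintro ⟨x, hx, rfl⟩
      rw [norm_appE_orth A hA, hx]
    · rintro rfl
      refine ⟨EuclideanSpace.single 0 1, ?_, ?_⟩
      · simp [EuclideanSpace.norm_single]
      · rw [norm_appE_orth A hA]
        simp [EuclideanSpace.norm_single]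
  rw [s1, hset, csInf_singleton]

lemma appE_diag0 (c : ℝ) (x : EuclideanSpace ℝ (Fin 2)) :
    appE (!![c, 0; 0, c⁻¹]) x 0 = c * x 0 := by
  rw [appE_apply]
  simp [Matrix.mulVec, dotProduct, Fin.sum_univ_two]

lemma appE_diag1 (c : ℝ) (x : EuclideanSpace ℝ (Fin 2)) :
    appE (!![c, 0; 0, c⁻¹]) x 1 = c⁻¹ * x 1 := by
  rw [appE_apply]
  simp [Matrix.mulVec, dotProduct, Fin.sum_univ_two]

lemma csq_le_invsq (c : ℝ) (hc : 0 < c) (hc1 : c ≤ 1) : c ^ 2 ≤ (c⁻¹) ^ 2 := by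
  have h1 : 1 ≤ c⁻¹ := (one_le_inv₀ hc).2 hc1
  nlinarith

lemma norm_appE_diag_le (c : ℝ) (hc : 0 < c) (hc1 : c ≤ 1) (x : EuclideanSpace ℝ (Fin 2)) :
    ‖appE (!![c, 0; 0, c⁻¹]) x‖ ≤ c⁻¹ * ‖x‖ := by
  have hinv : (0:ℝ) < c⁻¹ := inv_pos.2 hc
  rw [norm_euc, norm_euc, appE_diag0, appE_diag1]
  have h1 : (c * x 0) ^ 2 + (c⁻¹ * x 1) ^ 2 ≤ (c⁻¹) ^ 2 * (x 0 ^ 2 + x 1 ^ 2) := by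
    have := csq_le_invsq c hc hc1
    nlinarith [sq_nonneg (x 0), sq_nonneg (x 1)]
  calc Real.sqrt ((c * x 0) ^ 2 + (c⁻¹ * x 1) ^ 2)
      ≤ Real.sqrt ((c⁻¹) ^ 2 * (x 0 ^ 2 + x 1 ^ 2)) := Real.sqrt_le_sqrt h1
    _ = c⁻¹ * Real.sqrt (x 0 ^ 2 + x 1 ^ 2) := by
        rw [Real.sqrt_mul (by positivity), Real.sqrt_sq hinv.le]

lemma norm_appE_diag_ge (c : ℝ) (hc : 0 < c) (hc1 : c ≤ 1) (x : EuclideanSpace ℝ (Fin 2)) :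
    c * ‖x‖ ≤ ‖appE (!![c, 0; 0, c⁻¹]) x‖ := by
  rw [norm_euc, norm_euc, appE_diag0, appE_diag1]
  have h1 : c ^ 2 * (x 0 ^ 2 + x 1 ^ 2) ≤ (c * x 0) ^ 2 + (c⁻¹ * x 1) ^ 2 := by
    have := csq_le_invsq c hc hc1
    nlinarith [sq_nonneg (x 0), sq_nonneg (x 1)]
  calc c * Real.sqrt (x 0 ^ 2 + x 1 ^ 2)
      = Real.sqrt (c ^ 2 * (x 0 ^ 2 + x 1 ^ 2)) := by
        rw [Real.sqrt_mul (by positivity), Real.sqrt_sq hc.le]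
    _ ≤ Real.sqrt ((c * x 0) ^ 2 + (c⁻¹ * x 1) ^ 2) := Real.sqrt_le_sqrt h1

lemma s1_diag (c : ℝ) (hc : 0 < c) (hc1 : c ≤ 1) : s1 (!![c, 0; 0, c⁻¹]) = c := by
  set T := {r : ℝ | ∃ x : EuclideanSpace ℝ (Fin 2), ‖x‖ = 1 ∧ r = ‖appE (!![c, 0; 0, c⁻¹]) x‖}
    with hT
  have hmem : c ∈ T := by
    refine ⟨EuclideanSpace.single 0 1, by simp [EuclideanSpace.norm_single], ?_⟩
    rw [norm_euc, appE_diag0, appE_diag1]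
    have h0 : (EuclideanSpace.single (0 : Fin 2) (1:ℝ)) 0 = 1 := by
      simp [EuclideanSpace.single_apply]
    have h1 : (EuclideanSpace.single (0 : Fin 2) (1:ℝ)) 1 = 0 := by
      simp [EuclideanSpace.single_apply]
    rw [h0, h1]
    rw [mul_one, mul_zero]
    rw [show c ^ 2 + (0:ℝ) ^ 2 = c ^ 2 by ring, Real.sqrt_sq hc.le]
  have hlb : ∀ r ∈ T, c ≤ r := by
    rintro r ⟨x, hx, rfl⟩
    calc c = c * ‖x‖ := by rw [hx, mul_one]
      _ ≤ ‖appE (!![c, 0; 0, c⁻¹]) x‖ := norm_appE_diag_ge c hc hc1 x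
  exact le_antisymm (csInf_le ⟨c, hlb⟩ hmem) (le_csInf ⟨c, hmem⟩ hlb)

theorem stmt18 (c : ℝ) (hc : 0 < c) (hc2 : c ≤ 1 / 2)
    (A2 : Matrix (Fin 2) (Fin 2) ℝ) (hA2 : A2ᵀ * A2 = 1) :
    1 / Real.sqrt 2 ≤ stabRadius {(!![c, 0; 0, c⁻¹] : Matrix (Fin 2) (Fin 2) ℝ), A2} ∧
      min (s1 (!![c, 0; 0, c⁻¹] : Matrix (Fin 2) (Fin 2) ℝ)) (s1 A2) = c ∧ c < 1 / Real.sqrt 2 := by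
  set M1 : Matrix (Fin 2) (Fin 2) ℝ := !![c, 0; 0, c⁻¹] with hM1
  have hc1 : c ≤ 1 := le_trans hc2 (by norm_num)
  have hs2pos : (0:ℝ) < Real.sqrt 2 := by positivity
  have hs2sq : Real.sqrt 2 ^ 2 = 2 := Real.sq_sqrt (by norm_num)
  refine ⟨?_, ?_, ?_⟩
  · have hdetM1 : |M1.det| = 1 := by
      rw [hM1, Matrix.det_fin_two_of]
      field_simp
      norm_num
    have hdetA2 : |A2.det| = 1 := by
      have h := congrArg Matrix.det hA2
      rw [Matrix.det_mul, Matrix.det_transpose, Matrix.det_one] at h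
      rcases mul_self_eq_one_iff.1 h with h' | h' <;> rw [h'] <;> norm_num
    simp only [stabRadius]
    apply le_csInf
    · refine ⟨c⁻¹, inv_nonneg.2 hc.le, 1, one_pos, fun x0 => ?_⟩
      refine ⟨fun k => appE (M1 ^ k) x0,
        by show appE (M1 ^ 0) x0 = x0; rw [pow_zero, appE_one], ?_, ?_⟩
      · intro k
        refine ⟨M1, Set.mem_insert _ _, ?_⟩
        show appE (M1 ^ (k + 1)) x0 = appE M1 (appE (M1 ^ k) x0)
        rw [pow_succ', appE_mul]
      · intro k
        show ‖appE (M1 ^ k) x0‖ ≤ 1 * c⁻¹ ^ k * ‖x0‖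
        induction k with
        | zero => simp [appE_one]
        | succ k ih =>
          rw [pow_succ', appE_mul]
          calc ‖appE M1 (appE (M1 ^ k) x0)‖ ≤ c⁻¹ * ‖appE (M1 ^ k) x0‖ :=
              norm_appE_diag_le c hc hc1 _
            _ ≤ c⁻¹ * (1 * (c⁻¹) ^ k * ‖x0‖) :=
              mul_le_mul_of_nonneg_left ih (inv_nonneg.2 hc.le)
            _ = 1 * (c⁻¹) ^ (k + 1) * ‖x0‖ := by ring
    · rintro l ⟨hl0, C, hC, H⟩
      by_contra hlt
      push_neg at hlt
      have h1 : l * Real.sqrt 2 < 1 := by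
        have := mul_lt_mul_of_pos_right hlt hs2pos
        rwa [one_div, inv_mul_cancel₀ hs2pos.ne'] at this
      have hsq : 2 * l ^ 2 < 1 := by
        nlinarith [mul_nonneg hl0 hs2pos.le]
      have hkey := one_le_key M1 A2 hdetM1 hdetA2 l C hl0 hC H
      obtain ⟨k, hk⟩ := exists_pow_lt_of_lt_one (show (0:ℝ) < C⁻¹ ^ 2 by positivity) hsq
      have hk2 := hkey k
      have h2 : C ^ 2 * (2 * l ^ 2) ^ k < C ^ 2 * C⁻¹ ^ 2 :=
        mul_lt_mul_of_pos_left hk (by positivity)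
      have h3 : C ^ 2 * (C⁻¹ : ℝ) ^ 2 = 1 := by field_simp
      linarith
  · rw [s1_diag c hc hc1, s1_orth A2 hA2, min_eq_left hc1]
  · have h12 : (1:ℝ) / 2 < 1 / Real.sqrt 2 := by
      apply one_div_lt_one_div_of_lt hs2pos
      nlinarith
    linarith
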